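/- For any integers n ≥ 1, m ≥ 2, and k ≥ 1, if a solution φ on Γ_{n,m} satisfies one-person k-satisficing behavior and consistency, then for every game g ∈ Γ_{n,m} and every profile a ∈ φ(g), the profile a is a (k,…,k)-satisficing equilibrium of g. -/

import Mathlib

namespace Solutions

/-- A game with agent set `N ⊆ Fin n` (so at most `n` agents) and action set
`A i ⊆ Fin m` (so at most `m` actions) for each agent `i ∈ N`, together with a
total preorder (preference relation) for each agent on the set of action profiles. -/
structure Game (n m : ℕ) where
  N : Finset (Fin n)
  Nne : N.Nonempty
  A : Fin n → Finset (Fin m)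
  Atwo : ∀ i ∈ N, 2 ≤ (A i).card
  pref : (i : N) → ((j : N) → A j.1) → ((j : N) → A j.1) → Prop
  total : ∀ i a b, pref i a b ∨ pref i b a
  trans : ∀ i a b c, pref i a b → pref i b c → pref i a c

variable {n m : ℕ}

/-- The set of action profiles of `g`. -/
abbrev Game.Prof (g : Game n m) := (j : g.N) → g.A j.1

/-- Strict part `≻_i` of agent `i`'s preference relation. -/
def Game.strict (g : Game n m) (i : g.N) (a b : g.Prof) : Prop :=
  g.pref i a b ∧ ¬ g.pref i b a

/-- `rank_i(a | ⪰_i) = 1 + |{x ∈ A_i : (x, a_{-i}) ≻_i (a_i, a_{-i})}|`. -/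
noncomputable def Game.rank (g : Game n m) (i : g.N) (a : g.Prof) : ℕ :=
  1 + Nat.card {x : g.A i.1 // g.strict i (Function.update a i x) a}

/-- The game has strict preferences over unilateral deviations. -/
def Game.StrictUD (g : Game n m) : Prop :=
  ∀ (i : g.N) (a : g.Prof) (x x' : g.A i.1), x ≠ x' →
    (g.strict i (Function.update a i x) (Function.update a i x') ∨
      g.strict i (Function.update a i x') (Function.update a i x))

/-- Extend a profile of the agents in `S` to a profile of `g` by fixing every agent
`j ∉ S` to the action `a j`. -/
def Game.extend (g : Game n m) (S : Finset (Fin n)) (a : g.Prof)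
    (b : (j : S) → g.A j.1) : g.Prof :=
  fun j => if h : j.1 ∈ S then b ⟨j.1, h⟩ else a j

/-- The reduced game `g^{S,a}`: agents in `S` play the residual game obtained from
`g` by fixing each agent `j ∈ N ∖ S` to the action `a j`. -/
def Game.sub (g : Game n m) (S : Finset (Fin n)) (hne : S.Nonempty) (hS : S ⊆ g.N)
    (a : g.Prof) : Game n m where
  N := S
  Nne := hne
  A := g.A
  Atwo := fun i hi => g.Atwo i (hS hi)
  pref := fun i b b' => g.pref ⟨i.1, hS i.2⟩ (g.extend S a b) (g.extend S a b')
  total := fun i b b' => g.total ⟨i.1, hS i.2⟩ _ _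
  trans := fun i b b' b'' h h' => g.trans ⟨i.1, hS i.2⟩ _ _ _ h h'

/-- The restriction `a_S` of a profile `a` of `g` to the agents in `S`. -/
def Game.restrict (g : Game n m) (S : Finset (Fin n)) (hS : S ⊆ g.N) (a : g.Prof) :
    (j : S) → g.A j.1 :=
  fun j => a ⟨j.1, hS j.2⟩

/-- The set of `(k,…,k)`-satisficing equilibria of `g`. -/
def SAT (k : ℕ) (g : Game n m) : Set g.Prof := {a | ∀ i : g.N, g.rank i a ≤ k}

/-- One-person `k`-satisficing behavior: in every single-agent game (in `Γ_{n,m}`,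
i.e. with strict unilateral deviations), the solution is the set of profiles at
which the agent is `k`-satisficed. -/
def OnePersonSat (k : ℕ) (φ : (g : Game n m) → Set g.Prof) : Prop :=
  ∀ g : Game n m, g.StrictUD → g.N.card = 1 →
    φ g = {a : g.Prof | ∀ i : g.N, g.rank i a ≤ k}

/-- Consistency: if `a` is in the solution of `g`, then for every nonempty proper
subset `S` of the agents, `a_S` is in the solution of `g^{S,a}`. -/
def Consistent (φ : (g : Game n m) → Set g.Prof) : Prop :=
  ∀ g : Game n m, g.StrictUD → ∀ a ∈ φ g,
    ∀ (S : Finset (Fin n)) (hne : S.Nonempty) (hS : S ⊆ g.N), S ≠ g.N →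
      g.restrict S hS a ∈ φ (g.sub S hne hS a)

/-- Converse consistency: if (in a game with at least two agents) `a_S` is in the
solution of `g^{S,a}` for every nonempty proper subset `S` of the agents, then `a`
is in the solution of `g`. -/
def ConvConsistent (φ : (g : Game n m) → Set g.Prof) : Prop :=
  ∀ g : Game n m, g.StrictUD → 2 ≤ g.N.card → ∀ a : g.Prof,
    (∀ (S : Finset (Fin n)) (hne : S.Nonempty) (hS : S ⊆ g.N), S ≠ g.N →
      g.restrict S hS a ∈ φ (g.sub S hne hS a)) → a ∈ φ g

/-! Agent `i` is alone in the reduced game `g^{{i},a}`, which inherits strict unilateral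
deviations from `g`, and `i`'s rank at `a_i` there is its rank at `a` in `g`. Consistency puts
`a_i` into the solution of this one-person game, so one-person `k`-satisficing behavior bounds
the rank by `k`; if `g` itself has a single agent, that axiom applies to `g` directly. -/

namespace Game

section

variable (g : Game n m) {S : Finset (Fin n)} (hS : S ⊆ g.N) (a : g.Prof)

lemma extend_restrict : g.extend S a (g.restrict S hS a) = a := by
  funext j
  by_cases h : j.1 ∈ S <;> simp [extend, restrict, h]

lemma extend_update (b : (j : S) → g.A j.1) (i : S) (x : g.A i.1) :
    g.extend S a (Function.update b i x) =
      Function.update (g.extend S a b) ⟨i.1, hS i.2⟩ x := by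
  obtain ⟨i, hi⟩ := i
  funext ⟨j, hj⟩
  by_cases hji : j = i
  · subst hji
    simp [extend, hi]
  · have hne : (⟨j, hj⟩ : g.N) ≠ ⟨i, hS hi⟩ := fun h => hji (congrArg Subtype.val h)
    by_cases hjS : j ∈ S
    · have hne' : (⟨j, hjS⟩ : S) ≠ ⟨i, hi⟩ := fun h => hji (congrArg Subtype.val h)
      simp [extend, hjS, Function.update_of_ne hne, Function.update_of_ne hne']
    · simp [extend, hjS, Function.update_of_ne hne]

variable (hne : S.Nonempty)

lemma sub_strict_update_iff (b : (j : S) → g.A j.1) (i : S) (x x' : g.A i.1) :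
    (g.sub S hne hS a).strict i (Function.update b i x) (Function.update b i x') ↔
      g.strict ⟨i.1, hS i.2⟩ (Function.update (g.extend S a b) ⟨i.1, hS i.2⟩ x)
        (Function.update (g.extend S a b) ⟨i.1, hS i.2⟩ x') :=
  Iff.of_eq (congrArg₂ (g.strict _) (extend_update g hS a b i x) (extend_update g hS a b i x'))

lemma rank_sub_restrict (i : S) :
    (g.sub S hne hS a).rank i (g.restrict S hS a) = g.rank ⟨i.1, hS i.2⟩ a := by
  have hstrict (x : g.A i.1) :
      (g.sub S hne hS a).strict i (Function.update (g.restrict S hS a) i x) (g.restrict S hS a) ↔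
        g.strict ⟨i.1, hS i.2⟩ (Function.update a ⟨i.1, hS i.2⟩ x) a := by
    have hupdate := extend_update g hS a (g.restrict S hS a) i x
    rw [extend_restrict g hS] at hupdate
    exact Iff.of_eq (congrArg₂ (g.strict _) hupdate (extend_restrict g hS a))
  exact congrArg (1 + ·) (Nat.card_congr (Equiv.subtypeEquivRight hstrict))

end

lemma StrictUD.sub {g : Game n m} (hg : g.StrictUD) {S : Finset (Fin n)} (hS : S ⊆ g.N)
    (a : g.Prof) (hne : S.Nonempty) : (g.sub S hne hS a).StrictUD := fun i b x x' hxx =>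
  (hg ⟨i.1, hS i.2⟩ (g.extend S a b) x x' hxx).imp
    (sub_strict_update_iff g hS a hne b i x x').2 (sub_strict_update_iff g hS a hne b i x' x).2

end Game

theorem stmt6_general (k : ℕ)
    (φ : (g : Game n m) → Set g.Prof)
    (h1 : OnePersonSat k φ) (h2 : Consistent φ) :
    ∀ g : Game n m, g.StrictUD → ∀ a ∈ φ g, a ∈ SAT k g := by
  intro g hg a ha i
  by_cases hsingle : g.N.card = 1
  · rw [h1 g hg hsingle] at ha
    exact ha i
  have hS : {i.1} ⊆ g.N := Finset.singleton_subset_iff.2 i.2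
  have hproper : {i.1} ≠ g.N := fun h => hsingle (h ▸ Finset.card_singleton _)
  have hne := Finset.singleton_nonempty i.1
  have hmem := h2 g hg a ha {i.1} hne hS hproper
  rw [h1 _ (hg.sub hS a hne) (Finset.card_singleton _)] at hmem
  have hi : i.1 ∈ ({i.1} : Finset (Fin n)) := Finset.mem_singleton_self _
  exact (Game.rank_sub_restrict g hS a hne ⟨i.1, hi⟩).symm.trans_le (hmem ⟨i.1, hi⟩)

/-- if a solution `φ` on `Γ_{n,m}` satisfies one-person `k`-satisficing
behavior and consistency, then every profile in `φ(g)` is a `(k,…,k)`-satisficing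
equilibrium of `g`, for every `g ∈ Γ_{n,m}`. -/
theorem stmt6 (hn : 1 ≤ n) (hm : 2 ≤ m) (k : ℕ) (hk : 1 ≤ k)
    (φ : (g : Game n m) → Set g.Prof)
    (h1 : OnePersonSat k φ) (h2 : Consistent φ) :
    ∀ g : Game n m, g.StrictUD → ∀ a ∈ φ g, a ∈ SAT k g :=
  stmt6_general k φ h1 h2

end Solutions
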